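/- arXiv:1906.03912 — 2 statements merged into one kernel-verified Lean document; each statement's English description precedes it below -/
import Mathlib

section
/- Let f ≥ q ≥ 1 be integers. The subgroup of ℤ^f generated by the vectors αᵢ = eᵢ − e_{i+1} for 1 ≤ i ≤ f−1 together with α_f = e₁ + e₂ + ⋯ + e_q equals the lattice Λ = {x ∈ ℤ^f : q divides Σᵢ xᵢ}. -/
/-! The vectors `eᵢ - e_{i+1}` generate the kernel of the coordinate sum `σ : ℤ^f → ℤ`: the
differences `e_u - e_v` along the edges of a connected graph generate all differences, and a
vector `x` with `σ x = 0` is `∑ⱼ xⱼ (eⱼ - e_{i₀})`. Since `σ α_f = q`, adjoining `α_f` gives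
`ker σ + ℤ α_f = σ⁻¹(qℤ) = Λ`. -/

open Finset

def coordSum (ι : Type*) [Fintype ι] : (ι → ℤ) →+ ℤ where
  toFun x := ∑ i, x i
  map_zero' := by simp
  map_add' _ _ := sum_add_distrib

@[simp]
lemma coordSum_apply {ι : Type*} [Fintype ι] (x : ι → ℤ) : coordSum ι x = ∑ i, x i := rfl

section RootLattice

variable {ι : Type*} [DecidableEq ι]

lemma single_sub_single_mem_of_reachable {G : SimpleGraph ι} {H : AddSubgroup (ι → ℤ)}
    (hadj : ∀ u v, G.Adj u v → Pi.single u 1 - Pi.single v 1 ∈ H) {u v : ι}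
    (huv : G.Reachable u v) : Pi.single u 1 - Pi.single v 1 ∈ H := by
  obtain ⟨p⟩ := huv
  induction p with
  | nil => simp
  | cons h _ ih => simpa using add_mem (hadj _ _ h) ih

variable [Fintype ι]

lemma coordSum_single_sub_single (u v : ι) :
    coordSum ι (Pi.single u 1 - Pi.single v 1) = 0 := by
  simp

lemma ker_coordSum_le_of_preconnected {G : SimpleGraph ι} (hG : G.Preconnected)
    {H : AddSubgroup (ι → ℤ)} (hadj : ∀ u v, G.Adj u v → Pi.single u 1 - Pi.single v 1 ∈ H) :
    (coordSum ι).ker ≤ H := by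
  intro x hx
  rcases isEmpty_or_nonempty ι with _ | ⟨⟨i₀⟩⟩
  · simp [Subsingleton.elim x 0]
  have hx_eq : x = ∑ j, x j • (Pi.single j 1 - Pi.single i₀ 1) := by
    rw [AddMonoidHom.mem_ker, coordSum_apply] at hx
    calc x = ∑ j, Pi.single j (x j) := (univ_sum_single x).symm
      _ = ∑ j, x j • Pi.single j 1 - (∑ j, x j) • Pi.single i₀ 1 := by
        simp_rw [hx, zero_smul, sub_zero, ← Pi.single_smul', smul_eq_mul, mul_one]
      _ = ∑ j, x j • (Pi.single j 1 - Pi.single i₀ 1) := by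
        simp_rw [sum_smul, ← sum_sub_distrib, smul_sub]
  rw [hx_eq]
  exact sum_mem fun j _ => zsmul_mem (single_sub_single_mem_of_reachable hadj (hG j i₀)) _

end RootLattice

lemma simpleRoot_eq_single_sub_single {f : ℕ} (i k : Fin f) (hik : (i : ℕ) + 1 = k) :
    (fun j : Fin f => if (j : ℕ) = (i : ℕ) then (1 : ℤ)
      else if (j : ℕ) = (i : ℕ) + 1 then -1 else 0) = Pi.single i 1 - Pi.single k 1 := by
  funext j
  simp only [Pi.sub_apply, Pi.single_apply, Fin.ext_iff]
  split_ifs <;> omega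

lemma closure_simpleRoots_eq_ker_coordSum (f : ℕ) :
    AddSubgroup.closure {v : Fin f → ℤ | ∃ i : Fin f, (i : ℕ) + 1 < f ∧
        v = fun j : Fin f => if (j : ℕ) = (i : ℕ) then 1
          else if (j : ℕ) = (i : ℕ) + 1 then -1 else 0} = (coordSum (Fin f)).ker := by
  apply le_antisymm
  · rw [AddSubgroup.closure_le]
    rintro _ ⟨i, hi, rfl⟩
    rw [simpleRoot_eq_single_sub_single i ⟨i + 1, hi⟩ rfl]
    exact coordSum_single_sub_single _ _
  · refine ker_coordSum_le_of_preconnected (SimpleGraph.pathGraph_preconnected f) ?_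
    intro u v hadj
    rcases SimpleGraph.pathGraph_adj.mp hadj with huv | hvu
    · exact AddSubgroup.subset_closure
        ⟨u, huv ▸ v.isLt, (simpleRoot_eq_single_sub_single u v huv).symm⟩
    · rw [← neg_sub]
      exact neg_mem <| AddSubgroup.subset_closure
        ⟨v, hvu ▸ u.isLt, (simpleRoot_eq_single_sub_single v u hvu).symm⟩

lemma sum_ite_val_lt {f q : ℕ} (hqf : q ≤ f) :
    ∑ j : Fin f, (if (j : ℕ) < q then (1 : ℤ) else 0) = q := by
  rw [Fin.sum_univ_eq_sum_range (fun n => if n < q then (1 : ℤ) else 0), sum_boole,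
    Nat.cast_inj]
  convert card_range q using 2
  ext n
  simp only [mem_filter, mem_range]
  omega

theorem stmt_3_general (f q : ℕ) (hfq : q ≤ f) :
    (AddSubgroup.closure
        ({v : Fin f → ℤ | ∃ i : Fin f, (i : ℕ) + 1 < f ∧
            v = fun j : Fin f => if (j : ℕ) = (i : ℕ) then 1
                         else if (j : ℕ) = (i : ℕ) + 1 then -1 else 0} ∪
         {fun j : Fin f => if (j : ℕ) < q then (1 : ℤ) else 0}) :
      Set (Fin f → ℤ)) = {x : Fin f → ℤ | (q : ℤ) ∣ ∑ i, x i} := by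
  have hw : coordSum (Fin f) (fun j => if (j : ℕ) < q then 1 else 0) = q :=
    sum_ite_val_lt hfq
  rw [AddSubgroup.closure_union, closure_simpleRoots_eq_ker_coordSum,
    ← AddSubgroup.zmultiples_eq_closure, sup_comm, ← AddSubgroup.comap_map_eq,
    AddMonoidHom.map_zmultiples, hw]
  ext x
  simp [Int.mem_zmultiples_iff]

theorem stmt_3 (f q : ℕ) (hq : 1 ≤ q) (hfq : q ≤ f) :
    (AddSubgroup.closure
        ({v : Fin f → ℤ | ∃ i : Fin f, (i : ℕ) + 1 < f ∧
            v = fun j : Fin f => if (j : ℕ) = (i : ℕ) then 1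
                         else if (j : ℕ) = (i : ℕ) + 1 then -1 else 0} ∪
         {fun j : Fin f => if (j : ℕ) < q then (1 : ℤ) else 0}) :
      Set (Fin f → ℤ)) = {x : Fin f → ℤ | (q : ℤ) ∣ ∑ i, x i} :=
  stmt_3_general f q hfq
end

section
/- The set of vectors x = (x₁,x₂,x₃) ∈ ℤ³ with 3 dividing 2x₁ + x₂ + x₃ and x₁² + x₂² + x₃² − (1/9)·(2x₁ + x₂ + x₃)² = 2 consists of exactly the four vectors ±(0,1,−1) and ±(2,1,1). -/
/-!
Writing `s = 2x₁ + x₂ + x₃`, Cauchy–Schwarz against `(2,1,1)` gives `s² ≤ 6|x|²`, so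
`9Q(x) = 9|x|² - s² ≥ 3|x|²`. Hence `Q(x) = 2` forces `|x|² ≤ 6`, every coordinate lies in
`[-2, 2]`, and a search of that box leaves the four vectors.
-/

lemma sq_two_mul_add_add_le (a b c : ℤ) :
    (2 * a + b + c) ^ 2 ≤ 6 * (a ^ 2 + b ^ 2 + c ^ 2) := by
  nlinarith [sq_nonneg (a - 2 * b), sq_nonneg (a - 2 * c), sq_nonneg (b - c)]

lemma abs_le_two_of_form_eq (a b c : ℤ)
    (h : 9 * (a ^ 2 + b ^ 2 + c ^ 2) - (2 * a + b + c) ^ 2 = 18) :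
    |a| ≤ 2 ∧ |b| ≤ 2 ∧ |c| ≤ 2 := by
  have hnorm : a ^ 2 + b ^ 2 + c ^ 2 ≤ 6 := by linarith [sq_two_mul_add_add_le a b c]
  have hsq : ∀ t : ℤ, t ^ 2 ≤ 6 → |t| ≤ 2 := fun t ht => abs_le.2 ⟨by nlinarith, by nlinarith⟩
  exact ⟨hsq a (by nlinarith [sq_nonneg b, sq_nonneg c]),
    hsq b (by nlinarith [sq_nonneg a, sq_nonneg c]),
    hsq c (by nlinarith [sq_nonneg a, sq_nonneg b])⟩

lemma rat_form_eq_two_iff (a b c : ℤ) :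
    (a : ℚ) ^ 2 + (b : ℚ) ^ 2 + (c : ℚ) ^ 2 - (1 / 9) * (2 * (a : ℚ) + b + c) ^ 2 = 2 ↔
      9 * (a ^ 2 + b ^ 2 + c ^ 2) - (2 * a + b + c) ^ 2 = 18 := by
  rw [← Int.cast_inj (α := ℚ)]
  push_cast
  constructor <;> intro h <;> linarith

lemma eq_short_root_of_form_eq (a b c : ℤ) (hdvd : 3 ∣ 2 * a + b + c)
    (h : 9 * (a ^ 2 + b ^ 2 + c ^ 2) - (2 * a + b + c) ^ 2 = 18) :
    (a, b, c) = (0, 1, -1) ∨ (a, b, c) = (0, -1, 1) ∨ (a, b, c) = (2, 1, 1) ∨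
      (a, b, c) = (-2, -1, -1) := by
  obtain ⟨ha, hb, hc⟩ := abs_le_two_of_form_eq a b c h
  obtain ⟨ha₁, ha₂⟩ := abs_le.1 ha
  obtain ⟨hb₁, hb₂⟩ := abs_le.1 hb
  obtain ⟨hc₁, hc₂⟩ := abs_le.1 hc
  obtain ⟨k, hk⟩ := hdvd
  simp only [Prod.mk.injEq]
  interval_cases a <;> interval_cases b <;> interval_cases c <;> omega

theorem stmt_14 :
    {x : ℤ × ℤ × ℤ |
        (3 : ℤ) ∣ (2 * x.1 + x.2.1 + x.2.2) ∧
        ((x.1 : ℚ) ^ 2 + (x.2.1 : ℚ) ^ 2 + (x.2.2 : ℚ) ^ 2)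
          - (1 / 9) * (2 * (x.1 : ℚ) + (x.2.1 : ℚ) + (x.2.2 : ℚ)) ^ 2 = 2} =
      {(0, 1, -1), (0, -1, 1), (2, 1, 1), (-2, -1, -1)} := by
  ext ⟨a, b, c⟩
  simp only [Set.mem_ofPred_eq, Set.mem_insert_iff, Set.mem_singleton_iff, rat_form_eq_two_iff]
  constructor
  · rintro ⟨hdvd, h⟩
    exact eq_short_root_of_form_eq a b c hdvd h
  · rintro (h | h | h | h) <;> simp only [Prod.mk.injEq] at h <;>
      obtain ⟨rfl, rfl, rfl⟩ := h <;> decide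
end
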